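/- Let n ≥ 2 and let h : {1,…,n} → {1,…,n} be a Hessenberg function. For 0 ≤ i ≤ 2n−3 set q_H(i) = |{(k,j) ∈ {1,…,n} × {1,…,n} : 2 ≤ k ≤ h(n+1−j) and j + k − 3 = i}|. Then the following identity of polynomials in one variable t holds: ∑_{w ∈ S_n, w⁻¹(1) ≤ h(w⁻¹(n))} t^{2ℓ(w)} = (∑_{i=0}^{2n−3} q_H(i)·t^{2i}) · ∏_{ℓ=1}^{n−3} (1 + t² + … + t^{2ℓ}), where the product over ℓ is empty (hence equal to 1) when n ≤ 3. -/

import Mathlib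

/-!
Record the positions `p = w⁻¹(n)` of the largest and `w⁻¹(1)` of the smallest value: removing
first `n` and then `1` from `w ∈ S_n` leaves a position `q` of `1` among the other `n - 1` places
and a permutation `u ∈ S_{n-2}`, with `ℓ(w) = (n - 1 - p) + q + ℓ(u)` (positions counted from `0`).
Summing over `u` gives the Mahonian product `∏ [l + 1]_{t²}`, while the Hessenberg condition only
involves `(p, q)`; since `h(j) ≥ j` it reads `q + 2 ≤ h(p + 1)`, and `(k, j) = (q + 2, n - p)`
turns the remaining sum over `(p, q)` into `∑ q_H(i) t^{2i}`.
-/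

open Polynomial

/-- Number of inversions of a permutation of {1,…,n} (encoded on `Fin n`):
`ℓ(w) = |{(a,b) : a < b, w(a) > w(b)}|`. -/
def invCount {n : ℕ} (w : Equiv.Perm (Fin n)) : ℕ :=
  (Finset.univ.filter (fun p : Fin n × Fin n => p.1 < p.2 ∧ w p.2 < w p.1)).card

open Finset

namespace Equiv.Perm

variable {m : ℕ}

def insertAt (p v : Fin (m + 1)) (u : Perm (Fin m)) : Perm (Fin (m + 1)) :=
  (finSuccEquiv' p).trans ((optionCongr u).trans (finSuccEquiv' v).symm)

@[simp] lemma insertAt_apply_self (p v : Fin (m + 1)) (u : Perm (Fin m)) :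
    insertAt p v u p = v := by
  simp [insertAt]

@[simp] lemma insertAt_apply_succAbove (p v : Fin (m + 1)) (u : Perm (Fin m)) (i : Fin m) :
    insertAt p v u (p.succAbove i) = v.succAbove (u i) := by
  simp [insertAt]

lemma insertAt_injective (v : Fin (m + 1)) :
    Function.Injective fun pu : Fin (m + 1) × Perm (Fin m) => insertAt pu.1 v pu.2 := by
  rintro ⟨p, u⟩ ⟨p', u'⟩ hpu
  simp only at hpu
  obtain rfl : p = p' := (insertAt p v u).injective <| by
    rw [insertAt_apply_self, hpu, insertAt_apply_self]
  have hu : ∀ i, u i = u' i := fun i => Fin.succAbove_right_injective (p := v) <| by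
    rw [← insertAt_apply_succAbove, hpu, insertAt_apply_succAbove]
  rw [Equiv.ext hu]

lemma insertAt_bijective (v : Fin (m + 1)) :
    Function.Bijective fun pu : Fin (m + 1) × Perm (Fin m) => insertAt pu.1 v pu.2 := by
  refine (Fintype.bijective_iff_injective_and_card _).2 ⟨insertAt_injective v, ?_⟩
  simp [Fintype.card_perm, Nat.factorial_succ]

lemma sum_eq_sum_insertAt {M : Type*} [AddCommMonoid M] (v : Fin (m + 1))
    (f : Perm (Fin (m + 1)) → M) :
    ∑ w, f w = ∑ p, ∑ u : Perm (Fin m), f (insertAt p v u) := by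
  rw [← Fintype.sum_prod_type', Fintype.sum_bijective _ (insertAt_bijective v) _ f fun _ => rfl]

end Equiv.Perm

open Equiv Perm

lemma invCount_eq_sum {n : ℕ} (w : Perm (Fin n)) :
    invCount w = ∑ a, ∑ b, if a < b ∧ w b < w a then 1 else 0 := by
  rw [invCount, card_filter, Fintype.sum_prod_type]

lemma invCount_insertAt {m : ℕ} (p v : Fin (m + 1)) (u : Perm (Fin m)) :
    invCount (insertAt p v u) = invCount u + #{b | p < b ∧ insertAt p v u b < v}
      + #{a | a < p ∧ v < insertAt p v u a} := by
  set w := insertAt p v u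
  have hcol : #{a | a < p ∧ v < w a}
      = ∑ i, if p.succAbove i < p ∧ w p < w (p.succAbove i) then 1 else 0 := by
    rw [card_filter, Fin.sum_univ_succAbove _ p]
    simp [w]
  rw [invCount_eq_sum, invCount_eq_sum, card_filter, hcol, Fin.sum_univ_succAbove _ p]
  simp_rw [Fin.sum_univ_succAbove _ p, Fin.succAbove_lt_succAbove_iff]
  simp only [lt_self_iff_false, insertAt_apply_self, and_self, ↓reduceIte, insertAt_apply_succAbove,
    sum_boole, Nat.cast_id, zero_add, Fin.succAbove_lt_succAbove_iff, sum_add_distrib, w]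
  ring

lemma invCount_insertAt_last {m : ℕ} (p : Fin (m + 1)) (u : Perm (Fin m)) :
    invCount (insertAt p (Fin.last m) u) = invCount u + (m - p) := by
  have hrow : ({b | p < b ∧ insertAt p (Fin.last m) u b < Fin.last m} : Finset _) = Ioi p := by
    ext b
    simp only [mem_filter, mem_univ, true_and, mem_Ioi, and_iff_left_iff_imp]
    intro hb
    exact Fin.lt_last_iff_ne_last.2 <| by
      simpa using (insertAt p (Fin.last m) u).injective.ne hb.ne'
  simp [invCount_insertAt, hrow, Fin.le_last]

lemma invCount_insertAt_zero {m : ℕ} (q : Fin (m + 1)) (u : Perm (Fin m)) :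
    invCount (insertAt q 0 u) = invCount u + q := by
  have hcol : ({a | a < q ∧ 0 < insertAt q 0 u a} : Finset _) = Iio q := by
    ext a
    simp only [mem_filter, mem_univ, true_and, mem_Iio, and_iff_left_iff_imp]
    intro ha
    exact Fin.pos_iff_ne_zero.2 <| by
      simpa using (insertAt q 0 u).injective.ne ha.ne
  simp [invCount_insertAt, hcol]

theorem sum_pow_invCount {R : Type*} [CommSemiring R] (x : R) (m : ℕ) :
    ∑ u : Perm (Fin m), x ^ invCount u = ∏ l ∈ range m, ∑ j ∈ range (l + 1), x ^ j := by
  induction m with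
  | zero => simp [invCount]
  | succ k ih =>
    have hreflect : ∑ p : Fin (k + 1), x ^ (k - p) = ∑ j ∈ range (k + 1), x ^ j := by
      rw [Fin.sum_univ_eq_sum_range (fun j => x ^ (k - j)), ← sum_range_reflect (x ^ ·),
        add_tsub_cancel_right]
    simp_rw [sum_eq_sum_insertAt (Fin.last k), invCount_insertAt_last, pow_add, ← sum_mul,
      ← mul_sum, ih, hreflect, prod_range_succ]

lemma insertAt_last_insertAt_zero_inv_last {m : ℕ} (p : Fin (m + 2)) (q : Fin (m + 1))
    (u : Perm (Fin m)) : (insertAt p (Fin.last _) (insertAt q 0 u))⁻¹ (Fin.last _) = p := by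
  rw [Perm.inv_def, Equiv.symm_apply_eq]
  simp

lemma insertAt_last_insertAt_zero_inv_zero {m : ℕ} (p : Fin (m + 2)) (q : Fin (m + 1))
    (u : Perm (Fin m)) : (insertAt p (Fin.last _) (insertAt q 0 u))⁻¹ 0 = p.succAbove q := by
  rw [Perm.inv_def, Equiv.symm_apply_eq]
  simp

theorem sum_filter_pow_invCount {R : Type*} [CommSemiring R] (x : R) (m : ℕ)
    (P : Fin (m + 2) → Fin (m + 2) → Prop) [DecidableRel P] :
    ∑ w : Perm (Fin (m + 2)) with P (w⁻¹ 0) (w⁻¹ (Fin.last _)), x ^ invCount w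
      = (∑ p : Fin (m + 2), ∑ q : Fin (m + 1) with P (p.succAbove q) p, x ^ (m + 1 - p + q))
        * ∑ u : Perm (Fin m), x ^ invCount u := by
  rw [sum_filter, sum_eq_sum_insertAt (Fin.last _)]
  simp_rw [sum_eq_sum_insertAt (0 : Fin (m + 1)), insertAt_last_insertAt_zero_inv_last,
    insertAt_last_insertAt_zero_inv_zero, invCount_insertAt_last, invCount_insertAt_zero, sum_mul]
  refine sum_congr rfl fun p _ => ?_
  rw [sum_filter]
  refine sum_congr rfl fun q _ => ?_
  split_ifs
  · rw [mul_sum]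
    exact sum_congr rfl fun u _ => by ring
  · simp

lemma Fin.val_succAbove_add_one_le_iff {m N : ℕ} (p : Fin (m + 1)) (q : Fin m)
    (hp : (p : ℕ) + 1 ≤ N) : (p.succAbove q : ℕ) + 1 ≤ N ↔ (q : ℕ) + 2 ≤ N := by
  rcases lt_or_ge q.castSucc p with hq | hq
  · rw [Fin.lt_def, Fin.val_castSucc] at hq
    rw [Fin.succAbove_of_castSucc_lt _ _ hq, Fin.val_castSucc]
    omega
  · rw [Fin.succAbove_of_le_castSucc _ _ hq, Fin.val_succ]

lemma sum_succAbove_filter_eq_sum_filter_Icc {R : Type*} [CommSemiring R] (x : R) (m : ℕ)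
    (h : ℕ → ℕ) (hh : ∀ p : Fin (m + 2), (p : ℕ) + 1 ≤ h (p + 1)) :
    ∑ p : Fin (m + 2), ∑ q : Fin (m + 1) with (p.succAbove q : ℕ) + 1 ≤ h (p + 1),
        x ^ (m + 1 - p + q)
      = ∑ kj ∈ (Icc 1 (m + 2) ×ˢ Icc 1 (m + 2)) with 2 ≤ kj.1 ∧ kj.1 ≤ h (m + 2 + 1 - kj.2),
        x ^ (kj.2 + kj.1 - 3) := by
  simp_rw [Fin.val_succAbove_add_one_le_iff _ _ (hh _)]
  conv_lhs => simp only [sum_filter]; rw [← Fintype.sum_prod_type', ← sum_filter]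
  refine sum_bij' (fun pq _ => ((pq.2 : ℕ) + 2, m + 2 - pq.1))
    (fun kj hkj => by
      simp only [mem_filter, mem_product, mem_Icc] at hkj
      exact (⟨m + 2 - kj.2, by omega⟩, ⟨kj.1 - 2, by omega⟩))
    ?_ ?_ ?_ ?_ ?_
  · rintro ⟨p, q⟩ hpq
    simp only [mem_filter, mem_univ, true_and] at hpq
    simp only [mem_filter, mem_product, mem_Icc]
    refine ⟨⟨⟨by omega, by omega⟩, by omega, by omega⟩, by omega, ?_⟩
    rwa [show m + 2 + 1 - (m + 2 - p) = p + 1 by omega]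
  · rintro ⟨k, j⟩ hkj
    simp only [mem_filter, mem_product, mem_Icc] at hkj
    simp only [mem_filter, mem_univ, true_and]
    rw [show m + 2 - j + 1 = m + 2 + 1 - j by omega]
    omega
  · rintro ⟨p, q⟩ _
    ext <;> simp only <;> omega
  · rintro ⟨k, j⟩ hkj
    simp only [mem_filter, mem_product, mem_Icc] at hkj
    ext <;> simp only <;> omega
  · rintro ⟨p, q⟩ _
    congr 1
    omega

lemma sum_range_card_filter_mul_pow {α R : Type*} [CommSemiring R] (s : Finset α) (P : α → Prop)
    [DecidablePred P] (g : α → ℕ) (N : ℕ) (hg : ∀ a ∈ s, P a → g a < N) (y : R) :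
    ∑ i ∈ range N, (#{a ∈ s | P a ∧ g a = i} : R) * y ^ i = ∑ a ∈ s with P a, y ^ g a := by
  rw [← sum_fiberwise_of_maps_to (g := g) (t := range N) (fun a ha => by
    rw [mem_filter] at ha
    exact mem_range.2 (hg a ha.1 ha.2))]
  refine sum_congr rfl fun i _ => ?_
  rw [filter_filter, sum_congr rfl fun a ha => by rw [(mem_filter.1 ha).2.2], sum_const,
    nsmul_eq_mul]

/-- For n ≥ 2 and a Hessenberg function h, with
q_H(i) = |{(k,j) ∈ {1,…,n}² : 2 ≤ k ≤ h(n+1−j), j+k−3 = i}|, one has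
∑_{w ∈ S_n, w⁻¹(1) ≤ h(w⁻¹(n))} t^{2ℓ(w)}
  = (∑_{i=0}^{2n−3} q_H(i) t^{2i}) · ∏_{ℓ=1}^{n−3} (1 + t² + … + t^{2ℓ}),
the product being empty when n ≤ 3. Permutations are encoded on `Fin n`, position
j ∈ {1,…,n} corresponding to `⟨j-1,_⟩ : Fin n`; polynomials live in `ℤ[t]`. -/
theorem stmt_2 (n : ℕ) (hn : 2 ≤ n) (h : ℕ → ℕ)
    (hdom : ∀ j, 1 ≤ j → j ≤ n → j ≤ h j ∧ h j ≤ n) :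
    ∑ w ∈ Finset.univ.filter (fun w : Equiv.Perm (Fin n) =>
        ((w⁻¹ ⟨0, by omega⟩ : Fin n) : ℕ) + 1 ≤
          h (((w⁻¹ ⟨n - 1, by omega⟩ : Fin n) : ℕ) + 1)),
      (X : Polynomial ℤ) ^ (2 * invCount w) =
    (∑ i ∈ Finset.range (2 * n - 2),
        (C (((((Finset.Icc 1 n) ×ˢ (Finset.Icc 1 n)).filter
            (fun p : ℕ × ℕ => 2 ≤ p.1 ∧ p.1 ≤ h (n + 1 - p.2) ∧ p.2 + p.1 - 3 = i)).card : ℤ))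
          * X ^ (2 * i)))
      * ∏ l ∈ Finset.Icc 1 (n - 3), ∑ m ∈ Finset.range (l + 1), (X : Polynomial ℤ) ^ (2 * m) := by
  obtain ⟨m, rfl⟩ : ∃ m, n = m + 2 := ⟨n - 2, by omega⟩
  have hh : ∀ p : Fin (m + 2), (p : ℕ) + 1 ≤ h (p + 1) := fun p =>
    (hdom _ (by omega) (by omega)).1
  simp only [pow_mul, C_eq_natCast, ← and_assoc]
  rw [sum_range_card_filter_mul_pow _ _ _ _ fun a ha _ => by
      simp only [mem_product, mem_Icc] at ha; omega,
    ← sum_succAbove_filter_eq_sum_filter_Icc _ m h hh]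
  refine (sum_filter_pow_invCount (X ^ 2 : ℤ[X]) m fun a b => (a : ℕ) + 1 ≤ h (b + 1)).trans ?_
  rw [sum_pow_invCount]
  congr 1
  refine (prod_subset (fun l hl => by simp only [mem_Icc, mem_range] at hl ⊢; omega)
    fun l hl hl' => ?_).symm
  obtain rfl : l = 0 := by simp only [mem_range, mem_Icc, not_and, not_le] at hl hl'; omega
  simp
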